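/- arXiv:1108.1938 — 3 statements merged into one kernel-verified Lean document; each statement's English description precedes it below -/
import Mathlib

section
/- Let χ = (χ₀,…,χₙ) and χ' = (χ'₀,…,χ'ₙ) be weight vectors such that the normalization N(χ) is a permutation of the normalization N(χ'). Then the weighted projective spaces ℙ(χ) and ℙ(χ') are homeomorphic. -/
noncomputable section

/-- The unit sphere `S^{2n+1} ⊂ ℂ^{n+1}`. -/
def USphere (n : ℕ) : Type := {z : Fin (n + 1) → ℂ // ∑ i, Complex.normSq (z i) = 1}

instance (n : ℕ) : TopologicalSpace (USphere n) :=
  instTopologicalSpaceSubtype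

/-- The weighted `S¹`-action equivalence relation on the unit sphere. -/
def wpSetoid (n : ℕ) (χ : Fin (n + 1) → ℕ) : Setoid (USphere n) where
  r z w := ∃ g : ℂ, ‖g‖ = 1 ∧ ∀ i, g ^ χ i * z.1 i = w.1 i
  iseqv := by
    constructor
    · exact fun z => ⟨1, by simp⟩
    · rintro z w ⟨g, hg, h⟩
      have hg0 : g ≠ 0 := by
        intro h0; rw [h0] at hg; simp at hg
      refine ⟨g⁻¹, by simp [hg], fun i => ?_⟩
      rw [← h i, ← mul_assoc, ← mul_pow, inv_mul_cancel₀ hg0, one_pow, one_mul]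
    · rintro x y z ⟨g, hg, h⟩ ⟨g', hg', h'⟩
      refine ⟨g' * g, by simp [hg, hg'], fun i => ?_⟩
      rw [← h' i, ← h i, ← mul_assoc, mul_pow]

/-- The weighted projective space `ℙ(χ)` as the quotient of the unit sphere by the
weighted circle action, with the quotient topology. -/
def WProj (n : ℕ) (χ : Fin (n + 1) → ℕ) : Type := Quotient (wpSetoid n χ)

instance (n : ℕ) (χ : Fin (n + 1) → ℕ) : TopologicalSpace (WProj n χ) :=
  instTopologicalSpaceQuotient

/-- The second-smallest element of a multiset of naturals (for a singleton multiset we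
take its unique element, corresponding to normalizing a single weight to `1`). -/
def secondMin (s : Multiset ℕ) : ℕ :=
  (s.sort (· ≤ ·)).getD 1 ((s.sort (· ≤ ·)).getD 0 0)

/-- `b_p(χ)`: the second-smallest `p`-adic valuation among the weights. -/
def bval (p : ℕ) {n : ℕ} (χ : Fin (n + 1) → ℕ) : ℕ :=
  secondMin (Finset.univ.val.map fun i => (χ i).factorization p)

/-- The normalization `N(χ)` of a weight vector, characterized by
`v_p(N(χ)_i) = max (v_p(χ_i) - b_p(χ)) 0` for all primes `p`. -/
def normalizeWt {n : ℕ} (χ : Fin (n + 1) → ℕ) : Fin (n + 1) → ℕ :=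
  fun i => ∏ p ∈ (χ i).primeFactors, p ^ ((χ i).factorization p - bval p χ)

end

/-!
Every weighted projective space is homeomorphic to that of its normalization. If a prime `p` has
`b_p(χ) ≥ 1`, then `p` divides all weights except at most one, `χ_j`, and dividing those weights by
`p` gives a homeomorphic space. When `p` divides every weight, the two circle actions have the same
orbits, since `g ↦ g ^ p` is onto the circle. Otherwise the coordinate `z_j` is replaced by
`z_j ^ p / |z_j| ^ (p - 1)`, which is compatible with the actions, and since `p ∤ χ_j` it
identifies the orbits. In both cases a continuous bijection from a compact space onto a Hausdorff
one results. The step keeps `N(χ)` fixed and lowers the sum of the weights, so iterating it ends at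
`N(χ)`; finally permuting the weights permutes the coordinates.
-/

open Complex

section SecondMin

lemma secondMin_mem {s : Multiset ℕ} (hs : s ≠ 0) : secondMin s ∈ s := by
  rw [← Multiset.mem_sort (· ≤ ·), secondMin]
  rcases hl : s.sort (· ≤ ·) with _ | ⟨a, _ | ⟨b, t⟩⟩
  · exact absurd (by simpa [hl] using (Multiset.sort_eq s (· ≤ ·)).symm) hs
  · simp
  · simp

lemma secondMin_map_of_monotone {s : Multiset ℕ} (hs : s ≠ 0) {f : ℕ → ℕ} (hf : Monotone f) :
    secondMin (s.map f) = f (secondMin s) := by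
  have hsort : (s.map f).sort (· ≤ ·) = (s.sort (· ≤ ·)).map f := by
    refine List.Perm.eq_of_pairwise' (Multiset.pairwise_sort _ _)
      ((Multiset.pairwise_sort s _).map f fun _ _ h => hf h) (Multiset.coe_eq_coe.mp ?_)
    rw [Multiset.sort_eq, ← Multiset.map_coe, Multiset.sort_eq]
  rw [secondMin, secondMin, hsort]
  rcases hl : s.sort (· ≤ ·) with _ | ⟨a, _ | ⟨b, t⟩⟩
  · exact absurd (by simpa [hl] using (Multiset.sort_eq s (· ≤ ·)).symm) hs
  · simp
  · simp

lemma secondMin_eq_zero_of_two_le_count {s : Multiset ℕ} (h : 2 ≤ s.count 0) :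
    secondMin s = 0 := by
  rw [← Multiset.sort_eq s (· ≤ ·), Multiset.coe_count] at h
  have hsorted := Multiset.pairwise_sort s (· ≤ ·)
  rw [secondMin]
  rcases hl : s.sort (· ≤ ·) with _ | ⟨a, _ | ⟨b, t⟩⟩
  · rw [hl] at h; simp at h
  · rw [hl] at h; simp [List.count_cons] at h; split_ifs at h <;> omega
  · rw [hl] at h hsorted
    change b = 0
    by_contra hb
    have ht : 0 ∉ t := fun h0 => hb (Nat.le_zero.mp ((List.pairwise_cons.mp
      (List.pairwise_cons.mp hsorted).2).1 0 h0))
    simp [List.count_cons, List.count_eq_zero_of_not_mem ht, hb] at h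
    split_ifs at h <;> omega

end SecondMin

section Normalization

variable {n : ℕ}

lemma factorization_normalizeWt (χ : Fin (n + 1) → ℕ) (i : Fin (n + 1)) (q : ℕ) :
    (normalizeWt χ i).factorization q = (χ i).factorization q - bval q χ := by
  rw [normalizeWt, Nat.factorization_prod fun p hp =>
    pow_ne_zero _ (Nat.prime_of_mem_primeFactors hp).ne_zero, Finsupp.finsetSum_apply,
    Finset.sum_congr rfl fun p hp => by
      rw [(Nat.prime_of_mem_primeFactors hp).factorization_pow, Finsupp.single_apply],
    Finset.sum_ite_eq']
  split_ifs with hq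
  · rfl
  · rw [← Nat.support_factorization, Finsupp.notMem_support_iff] at hq
    rw [hq, Nat.zero_sub]

lemma normalizeWt_pos (χ : Fin (n + 1) → ℕ) (i : Fin (n + 1)) : 0 < normalizeWt χ i :=
  Finset.prod_pos fun _ hp => pow_pos (Nat.prime_of_mem_primeFactors hp).pos _

lemma normalizeWt_eq_self {χ : Fin (n + 1) → ℕ} (hχ : ∀ i, 0 < χ i)
    (h : ∀ p, p.Prime → bval p χ = 0) : normalizeWt χ = χ := by
  funext i
  refine Nat.eq_of_factorization_eq (normalizeWt_pos χ i).ne' (hχ i).ne' fun q => ?_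
  rw [factorization_normalizeWt]
  by_cases hq : q.Prime
  · rw [h q hq, Nat.sub_zero]
  · simp [Nat.factorization_eq_zero_of_not_prime _ hq]

def divideOut (p : ℕ) (χ : Fin (n + 1) → ℕ) : Fin (n + 1) → ℕ :=
  fun i => if p ∣ χ i then χ i / p else χ i

lemma divideOut_pos {p : ℕ} (hp : 0 < p) {χ : Fin (n + 1) → ℕ} (hχ : ∀ i, 0 < χ i)
    (i : Fin (n + 1)) : 0 < divideOut p χ i := by
  unfold divideOut
  split_ifs with h
  · exact Nat.div_pos (Nat.le_of_dvd (hχ i) h) hp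
  · exact hχ i

lemma sum_divideOut_lt {p : ℕ} (hp : 1 < p) {χ : Fin (n + 1) → ℕ} (hχ : ∀ i, 0 < χ i)
    {j : Fin (n + 1)} (hj : p ∣ χ j) : ∑ i, divideOut p χ i < ∑ i, χ i := by
  refine Finset.sum_lt_sum (fun i _ => ?_) ⟨j, Finset.mem_univ j, ?_⟩
  · unfold divideOut
    split_ifs
    exacts [Nat.div_le_self _ _, le_rfl]
  · simpa [divideOut, hj] using Nat.div_lt_self (hχ j) hp

lemma factorization_divideOut {p : ℕ} (hp : p.Prime) (χ : Fin (n + 1) → ℕ) (i : Fin (n + 1)) :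
    (divideOut p χ i).factorization = (χ i).factorization - Finsupp.single p 1 := by
  unfold divideOut
  split_ifs with h
  · rw [Nat.factorization_div h, hp.factorization]
  · ext q
    rcases eq_or_ne q p with rfl | hq
    · simp [Nat.factorization_eq_zero_of_not_dvd h]
    · simp [hq.symm]

lemma bval_divideOut {p : ℕ} (hp : p.Prime) (χ : Fin (n + 1) → ℕ) (q : ℕ) :
    bval q (divideOut p χ) = bval q χ - Finsupp.single p 1 q := by
  have hne : (Finset.univ.val.map fun i => (χ i).factorization q) ≠ 0 := by simp
  rw [bval, bval, ← secondMin_map_of_monotone hne fun a b hab => Nat.sub_le_sub_right hab _,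
    Multiset.map_map]
  simp only [Function.comp_def, factorization_divideOut hp, Finsupp.tsub_apply]

lemma normalizeWt_divideOut {p : ℕ} (hp : p.Prime) {χ : Fin (n + 1) → ℕ}
    (hb : 1 ≤ bval p χ) : normalizeWt (divideOut p χ) = normalizeWt χ := by
  funext i
  refine Nat.eq_of_factorization_eq (normalizeWt_pos _ i).ne' (normalizeWt_pos χ i).ne'
    fun q => ?_
  rw [factorization_normalizeWt, factorization_normalizeWt, bval_divideOut hp,
    factorization_divideOut hp, Finsupp.tsub_apply]
  refine Nat.sub_sub_sub_cancel_right ?_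
  rcases eq_or_ne p q with rfl | hq
  · simpa using hb
  · simp [hq]

lemma exists_dvd_of_one_le_bval {p : ℕ} {χ : Fin (n + 1) → ℕ} (hb : 1 ≤ bval p χ) :
    ∃ i, p ∣ χ i := by
  obtain ⟨i, -, hi⟩ := Multiset.mem_map.mp (secondMin_mem (s := Finset.univ.val.map
    fun i => (χ i).factorization p) (by simp))
  exact ⟨i, Nat.dvd_of_factorization_pos (by rw [bval] at hb; omega)⟩

lemma dvd_of_one_le_bval {p : ℕ} {χ : Fin (n + 1) → ℕ} (hb : 1 ≤ bval p χ) {i j : Fin (n + 1)}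
    (hij : i ≠ j) (hj : ¬ p ∣ χ j) : p ∣ χ i := by
  by_contra hi
  have hcount : 2 ≤ (Finset.univ.val.map fun k => (χ k).factorization p).count 0 := by
    rw [Multiset.count_map, ← Finset.filter_val]
    exact Finset.one_lt_card.mpr ⟨i, by simp [Nat.factorization_eq_zero_of_not_dvd hi],
      j, by simp [Nat.factorization_eq_zero_of_not_dvd hj], hij⟩
  rw [bval, secondMin_eq_zero_of_two_le_count hcount] at hb
  omega

end Normalization

lemma exists_pow_eq_of_coprime {M : Type*} [Monoid M] {ζ : M} {d m : ℕ} (hζ : ζ ^ d = 1)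
    (hd : d ≠ 0) (hcop : m.Coprime d) : ∃ ξ : M, ξ ^ d = 1 ∧ ξ ^ m = ζ := by
  refine ⟨ζ ^ m ^ (d.totient - 1), by rw [← pow_mul, mul_comm, pow_mul, hζ, one_pow], ?_⟩
  rw [← pow_mul, pow_sub_one_mul (Nat.totient_pos.mpr (Nat.pos_of_ne_zero hd)).ne',
    pow_eq_pow_mod _ hζ, Nat.ModEq.pow_totient hcop, ← pow_eq_pow_mod _ hζ, pow_one]

lemma exists_pow_eq_of_norm_eq_one {g : ℂ} (hg : ‖g‖ = 1) {d : ℕ} (hd : d ≠ 0) :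
    ∃ k : ℂ, ‖k‖ = 1 ∧ k ^ d = g := by
  obtain ⟨k, hk⟩ := IsAlgClosed.exists_pow_nat_eq g (Nat.pos_of_ne_zero hd)
  refine ⟨k, (pow_eq_one_iff_of_nonneg (norm_nonneg k) hd).mp ?_, hk⟩
  rw [← norm_pow, hk, hg]

/-- The map `w ↦ w ^ d / ‖w‖ ^ (d - 1)`: the `d`-th power on arguments, the identity on
moduli. -/
noncomputable def radialPow (d : ℕ) (w : ℂ) : ℂ := w ^ d * ((‖w‖ : ℂ) ^ (d - 1))⁻¹

section RadialPow

variable {d : ℕ}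

lemma ofReal_norm_pow_ne_zero {w : ℂ} (hw : w ≠ 0) (k : ℕ) : (‖w‖ : ℂ) ^ k ≠ 0 :=
  pow_ne_zero _ (ofReal_ne_zero.mpr (norm_ne_zero_iff.mpr hw))

lemma radialPow_zero (hd : d ≠ 0) : radialPow d 0 = 0 := by
  simp [radialPow, hd]

lemma norm_radialPow (hd : d ≠ 0) (w : ℂ) : ‖radialPow d w‖ = ‖w‖ := by
  rcases eq_or_ne w 0 with rfl | hw
  · rw [radialPow_zero hd]
  have hpow : ‖w‖ ^ d = ‖w‖ * ‖w‖ ^ (d - 1) := by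
    rw [← pow_succ', Nat.sub_add_cancel (Nat.pos_of_ne_zero hd)]
  rw [radialPow, norm_mul, norm_inv, norm_pow, norm_pow, Complex.norm_real,
    Real.norm_of_nonneg (norm_nonneg w), hpow,
    mul_inv_cancel_right₀ (pow_ne_zero _ (norm_ne_zero_iff.mpr hw))]

lemma continuous_radialPow (hd : d ≠ 0) : Continuous (radialPow d) := by
  refine continuous_iff_continuousAt.mpr fun w => ?_
  rcases eq_or_ne w 0 with rfl | hw
  · rw [ContinuousAt, radialPow_zero hd, tendsto_zero_iff_norm_tendsto_zero]
    simpa [norm_radialPow hd] using continuous_norm.tendsto (0 : ℂ)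
  · refine (continuous_pow d).continuousAt.mul (ContinuousAt.inv₀ (by fun_prop) ?_)
    exact ofReal_norm_pow_ne_zero hw _

lemma radialPow_mul_of_norm_eq_one {u : ℂ} (hu : ‖u‖ = 1) (w : ℂ) :
    radialPow d (u * w) = u ^ d * radialPow d w := by
  rw [radialPow, radialPow, mul_pow, norm_mul, hu, one_mul, mul_assoc]

lemma radialPow_surjective (hd : d ≠ 0) : Function.Surjective (radialPow d) := by
  intro w
  rcases eq_or_ne w 0 with rfl | hw
  · exact ⟨0, radialPow_zero hd⟩
  obtain ⟨z, hz⟩ :=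
    IsAlgClosed.exists_pow_nat_eq (w * (‖w‖ : ℂ) ^ (d - 1)) (Nat.pos_of_ne_zero hd)
  have hnorm : ‖z‖ = ‖w‖ := by
    refine (pow_left_inj₀ (norm_nonneg z) (norm_nonneg w) hd).mp ?_
    rw [← norm_pow, hz, norm_mul, norm_pow, Complex.norm_real, Real.norm_of_nonneg (norm_nonneg w),
      ← pow_succ', Nat.sub_add_cancel (Nat.pos_of_ne_zero hd)]
  refine ⟨z, ?_⟩
  rw [radialPow, hz, hnorm, mul_assoc, mul_inv_cancel₀ (ofReal_norm_pow_ne_zero hw _), mul_one]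

lemma exists_eq_mul_of_radialPow_eq (hd : d ≠ 0) {a b : ℂ} (h : radialPow d a = radialPow d b) :
    ∃ ζ : ℂ, ζ ^ d = 1 ∧ b = ζ * a := by
  have hnorm : ‖a‖ = ‖b‖ := by rw [← norm_radialPow hd a, ← norm_radialPow hd b, h]
  rcases eq_or_ne a 0 with rfl | ha
  · exact ⟨1, one_pow d, by simpa using hnorm.symm⟩
  have hpow : a ^ d = b ^ d := by
    rw [radialPow, radialPow, ← hnorm] at h
    exact mul_right_cancel₀ (inv_ne_zero (ofReal_norm_pow_ne_zero ha _)) h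
  exact ⟨b / a, by rw [div_pow, ← hpow, div_self (pow_ne_zero _ ha)], by field_simp⟩

end RadialPow

namespace USphere

variable {n : ℕ}

lemma norm_le_one (z : USphere n) (i : Fin (n + 1)) : ‖z.1 i‖ ≤ 1 := by
  have : ‖z.1 i‖ ^ 2 ≤ 1 := calc
    ‖z.1 i‖ ^ 2 ≤ ∑ j, normSq (z.1 j) := by
      rw [← normSq_eq_norm_sq]
      exact Finset.single_le_sum (fun j _ => normSq_nonneg (z.1 j)) (Finset.mem_univ i)
    _ = 1 := z.2
  exact (sq_le_one_iff₀ (norm_nonneg _)).mp this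

instance : T2Space (USphere n) :=
  inferInstanceAs (T2Space {z : Fin (n + 1) → ℂ // ∑ i, normSq (z i) = 1})

instance : CompactSpace (USphere n) := by
  refine isCompact_iff_compactSpace.mp (IsCompact.of_isClosed_subset
    (isCompact_univ_pi fun _ => isCompact_closedBall (0 : ℂ) 1) ?_ fun z hz => ?_)
  · exact isClosed_eq (by fun_prop) continuous_const
  · exact Set.mem_univ_pi.mpr fun i => mem_closedBall_zero_iff.mpr (norm_le_one ⟨z, hz⟩ i)

def mapCoord (f : Fin (n + 1) → ℂ → ℂ) (hf : ∀ i x, ‖f i x‖ = ‖x‖) (z : USphere n) :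
    USphere n :=
  ⟨fun i => f i (z.1 i), by simpa only [normSq_eq_norm_sq, hf] using z.2⟩

variable {f : Fin (n + 1) → ℂ → ℂ} {hf : ∀ i x, ‖f i x‖ = ‖x‖}

lemma continuous_mapCoord (hc : ∀ i, Continuous (f i)) : Continuous (mapCoord f hf) :=
  Continuous.subtype_mk (continuous_pi fun i =>
    (hc i).comp ((continuous_apply i).comp continuous_subtype_val)) _

lemma mapCoord_surjective (hs : ∀ i, Function.Surjective (f i)) :
    Function.Surjective (mapCoord f hf) := by
  choose g hg using hs
  refine fun w => ⟨⟨fun i => g i (w.1 i), ?_⟩, Subtype.ext (funext fun i => hg i _)⟩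
  have hnorm : ∀ i, ‖g i (w.1 i)‖ = ‖w.1 i‖ := fun i => by rw [← hf, hg]
  simpa only [normSq_eq_norm_sq, hnorm] using w.2

def permute (σ : Equiv.Perm (Fin (n + 1))) (z : USphere n) : USphere n :=
  ⟨z.1 ∘ σ, (Equiv.sum_comp σ fun i => normSq (z.1 i)).trans z.2⟩

lemma continuous_permute (σ : Equiv.Perm (Fin (n + 1))) : Continuous (permute σ) := by
  refine Continuous.subtype_mk ?_ _
  exact continuous_pi fun i => (continuous_apply (σ i)).comp continuous_subtype_val

lemma permute_surjective (σ : Equiv.Perm (Fin (n + 1))) : Function.Surjective (permute σ) :=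
  fun z => ⟨permute σ.symm z, Subtype.ext (funext fun i => by simp [permute])⟩

end USphere

namespace WProj

variable {n : ℕ}

def act (χ : Fin (n + 1) → ℕ) (g : ℂ) (hg : ‖g‖ = 1) : USphere n → USphere n :=
  USphere.mapCoord (fun i x => g ^ χ i * x) fun i x => by simp [hg]

lemma mk_eq_mk_iff {χ : Fin (n + 1) → ℕ} {z w : USphere n} :
    (Quotient.mk (wpSetoid n χ) z = Quotient.mk _ w) ↔ ∃ g, ∃ hg : ‖g‖ = 1, act χ g hg z = w :=
  ⟨fun h => let ⟨g, hg, hgw⟩ := Quotient.exact h; ⟨g, hg, Subtype.ext (funext hgw)⟩,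
    fun ⟨g, hg, hgw⟩ => Quotient.sound ⟨g, hg, fun _ => hgw ▸ rfl⟩⟩

lemma isOpenQuotientMap_mk (χ : Fin (n + 1) → ℕ) :
    IsOpenQuotientMap (Y := WProj n χ) (Quotient.mk (wpSetoid n χ)) := by
  refine ⟨Quotient.mk_surjective, continuous_quotient_mk', fun U hU => ?_⟩
  have hsat : Quotient.mk (wpSetoid n χ) ⁻¹' (Quotient.mk (wpSetoid n χ) '' U) =
      ⋃ g : Metric.sphere (0 : ℂ) 1, act χ g (mem_sphere_zero_iff_norm.mp g.2) ⁻¹' U := by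
    ext w
    simp only [Set.mem_preimage, Set.mem_image, Set.mem_iUnion]
    constructor
    · rintro ⟨z, hz, hzw⟩
      obtain ⟨g, hg, rfl⟩ := mk_eq_mk_iff.mp hzw.symm
      exact ⟨⟨g, mem_sphere_zero_iff_norm.mpr hg⟩, hz⟩
    · rintro ⟨g, hg⟩
      exact ⟨_, hg, (mk_eq_mk_iff.mpr ⟨g, _, rfl⟩).symm⟩
  exact isOpen_coinduced.mpr (hsat ▸ isOpen_iUnion fun g =>
    hU.preimage (USphere.continuous_mapCoord fun i => by fun_prop))

instance (χ : Fin (n + 1) → ℕ) : CompactSpace (WProj n χ) :=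
  Quotient.compactSpace

/-- The graph of the relation is the image of the compact space `S¹ × S^{2n+1}` under
`(g, z) ↦ (z, g • z)`. -/
instance (χ : Fin (n + 1) → ℕ) : T2Space (WProj n χ) := by
  rw [t2Space_iff_of_isOpenQuotientMap (isOpenQuotientMap_mk χ)]
  have hcont : Continuous fun gz : Metric.sphere (0 : ℂ) 1 × USphere n =>
      (gz.2, act χ gz.1 (mem_sphere_zero_iff_norm.mp gz.1.2) gz.2) :=
    continuous_snd.prodMk (Continuous.subtype_mk (continuous_pi fun i =>
      ((continuous_subtype_val.comp continuous_fst).pow _).mul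
        ((continuous_apply i).comp (continuous_subtype_val.comp continuous_snd))) _)
  convert (isCompact_range hcont).isClosed using 1
  ext ⟨z, w⟩
  refine mk_eq_mk_iff.trans ⟨fun ⟨g, hg, h⟩ => ⟨(⟨g, mem_sphere_zero_iff_norm.mpr hg⟩, z), ?_⟩, ?_⟩
  · simp [h]
  · rintro ⟨⟨g, z'⟩, h⟩
    obtain ⟨rfl, rfl⟩ := Prod.mk.inj h
    exact ⟨g, mem_sphere_zero_iff_norm.mp g.2, rfl⟩

theorem nonempty_homeomorph_of_rel_iff {χ ψ : Fin (n + 1) → ℕ} {φ : USphere n → USphere n}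
    (hφ : Continuous φ) (hsurj : Function.Surjective φ)
    (hrel : ∀ a b, (wpSetoid n χ).r a b ↔ (wpSetoid n ψ).r (φ a) (φ b)) :
    Nonempty (WProj n χ ≃ₜ WProj n ψ) := by
  let F : WProj n χ → WProj n ψ := Quotient.map' φ fun a b => (hrel a b).1
  have hinj : Function.Injective F := by
    rintro ⟨a⟩ ⟨b⟩ h
    exact Quotient.sound ((hrel a b).2 (Quotient.exact h))
  have hsurjF : Function.Surjective F := by
    rintro ⟨w⟩
    obtain ⟨z, rfl⟩ := hsurj w
    exact ⟨Quotient.mk _ z, rfl⟩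
  exact ⟨(hφ.quotient_map' _ : Continuous F).homeoOfEquivCompactToT2
    (f := Equiv.ofBijective F ⟨hinj, hsurjF⟩)⟩

theorem nonempty_homeomorph_comp_perm (χ : Fin (n + 1) → ℕ) (σ : Equiv.Perm (Fin (n + 1))) :
    Nonempty (WProj n χ ≃ₜ WProj n (χ ∘ σ)) :=
  nonempty_homeomorph_of_rel_iff (USphere.continuous_permute σ)
    (USphere.permute_surjective σ) fun _ _ =>
      exists_congr fun _ => and_congr_right fun _ => σ.forall_congr_right.symm

theorem nonempty_homeomorph_of_eq_mul {χ ψ : Fin (n + 1) → ℕ} {d : ℕ} (hd : d ≠ 0)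
    (h : ∀ i, χ i = d * ψ i) : Nonempty (WProj n χ ≃ₜ WProj n ψ) := by
  refine nonempty_homeomorph_of_rel_iff continuous_id Function.surjective_id fun a b => ⟨?_, ?_⟩
  · rintro ⟨g, hg, hab⟩
    refine ⟨g ^ d, by rw [norm_pow, hg, one_pow], fun i => ?_⟩
    rw [← pow_mul, ← h i]
    exact hab i
  · rintro ⟨g, hg, hab⟩
    obtain ⟨k, hk, rfl⟩ := exists_pow_eq_of_norm_eq_one hg hd
    exact ⟨k, hk, fun i => by rw [h i, pow_mul]; exact hab i⟩

/-- The sphere map applies `radialPow d` to coordinate `j`: this turns the action of `g` into that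
of `g ^ d`, and the `d`-th root of unity by which two preimages of `radialPow d` can differ is
absorbed by a `χ j`-th power, as `χ j` is prime to `d`. -/
theorem nonempty_homeomorph_of_eq_mul_of_coprime {χ ψ : Fin (n + 1) → ℕ} {d : ℕ} (hd : d ≠ 0)
    (j : Fin (n + 1)) (hcop : (χ j).Coprime d) (hj : ψ j = χ j)
    (h : ∀ i, i ≠ j → χ i = d * ψ i) : Nonempty (WProj n χ ≃ₜ WProj n ψ) := by
  let f : Fin (n + 1) → ℂ → ℂ := fun i => if i = j then radialPow d else id
  have hf : ∀ i x, ‖f i x‖ = ‖x‖ := fun i x => by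
    unfold f; split_ifs
    exacts [norm_radialPow hd x, rfl]
  refine nonempty_homeomorph_of_rel_iff (φ := USphere.mapCoord f hf)
    (USphere.continuous_mapCoord fun i => ?_) (USphere.mapCoord_surjective fun i => ?_)
    fun a b => ⟨?_, ?_⟩
  · unfold f; split_ifs
    exacts [continuous_radialPow hd, continuous_id]
  · unfold f; split_ifs
    exacts [radialPow_surjective hd, Function.surjective_id]
  · rintro ⟨g, hg, hab⟩
    refine ⟨g ^ d, by rw [norm_pow, hg, one_pow], fun i => ?_⟩
    show (g ^ d) ^ ψ i * f i (a.1 i) = f i (b.1 i)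
    rcases eq_or_ne i j with rfl | hij
    · simp only [f, if_pos rfl]
      rw [← hab i, radialPow_mul_of_norm_eq_one (by rw [norm_pow, hg, one_pow]), hj]
      ring
    · simp only [f, if_neg hij, id]
      rw [← pow_mul, ← h i hij]
      exact hab i
  · rintro ⟨g, hg, hab⟩
    obtain ⟨k, hk, rfl⟩ := exists_pow_eq_of_norm_eq_one hg hd
    have habj : radialPow d (k ^ χ j * a.1 j) = radialPow d (b.1 j) := by
      have := hab j
      simp only [USphere.mapCoord, f, if_true] at this
      rw [radialPow_mul_of_norm_eq_one (by rw [norm_pow, hk, one_pow]), ← this, hj]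
      ring
    obtain ⟨ζ, hζ, hb⟩ := exists_eq_mul_of_radialPow_eq hd habj
    obtain ⟨ξ, hξd, hξ⟩ := exists_pow_eq_of_coprime hζ hd hcop
    refine ⟨ξ * k, by rw [norm_mul, Complex.norm_eq_one_of_pow_eq_one hξd hd, hk, one_mul],
      fun i => ?_⟩
    rcases eq_or_ne i j with rfl | hij
    · rw [mul_pow, hξ, mul_assoc, hb]
    · have := hab i
      simp only [USphere.mapCoord, f, if_neg hij, id] at this
      rw [h i hij, mul_pow, pow_mul, hξd, one_pow, one_mul, pow_mul]
      exact this

theorem nonempty_homeomorph_divideOut {p : ℕ} (hp : p.Prime) {χ : Fin (n + 1) → ℕ}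
    (hb : 1 ≤ bval p χ) : Nonempty (WProj n χ ≃ₜ WProj n (divideOut p χ)) := by
  by_cases hall : ∀ i, p ∣ χ i
  · refine nonempty_homeomorph_of_eq_mul hp.ne_zero fun i => ?_
    simp [divideOut, hall i, Nat.mul_div_cancel' (hall i)]
  · obtain ⟨j, hj⟩ := not_forall.mp hall
    refine nonempty_homeomorph_of_eq_mul_of_coprime hp.ne_zero j
      (Nat.Coprime.symm ((hp.coprime_iff_not_dvd).mpr hj)) (by simp [divideOut, hj])
      fun i hij => ?_
    have hi := dvd_of_one_le_bval hb hij hj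
    simp [divideOut, hi, Nat.mul_div_cancel' hi]

theorem nonempty_homeomorph_normalizeWt (χ : Fin (n + 1) → ℕ) (hχ : ∀ i, 0 < χ i) :
    Nonempty (WProj n χ ≃ₜ WProj n (normalizeWt χ)) := by
  by_cases hB : ∃ p, p.Prime ∧ 1 ≤ bval p χ
  · obtain ⟨p, hp, hb⟩ := hB
    obtain ⟨e⟩ := nonempty_homeomorph_divideOut hp hb
    obtain ⟨e'⟩ := nonempty_homeomorph_normalizeWt (divideOut p χ) (divideOut_pos hp.pos hχ)
    rw [normalizeWt_divideOut hp hb] at e'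
    exact ⟨e.trans e'⟩
  · simp only [not_exists, not_and, not_le, Nat.lt_one_iff] at hB
    rw [normalizeWt_eq_self hχ hB]
    exact ⟨Homeomorph.refl _⟩
termination_by ∑ i, χ i
decreasing_by
  obtain ⟨j, hj⟩ := exists_dvd_of_one_le_bval hb
  exact sum_divideOut_lt hp.one_lt hχ hj

end WProj

/-- If the normalizations of two weight vectors agree up to a permutation,
then the corresponding weighted projective spaces are homeomorphic. -/
theorem wproj_homeomorph_of_normalization_perm
    (n : ℕ) (χ χ' : Fin (n + 1) → ℕ) (hχ : ∀ i, 0 < χ i) (hχ' : ∀ i, 0 < χ' i)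
    (h : ∃ σ : Equiv.Perm (Fin (n + 1)), ∀ i, normalizeWt χ (σ i) = normalizeWt χ' i) :
    Nonempty (WProj n χ ≃ₜ WProj n χ') := by
  obtain ⟨σ, hσ⟩ := h
  obtain ⟨e⟩ := WProj.nonempty_homeomorph_normalizeWt χ hχ
  obtain ⟨e'⟩ := WProj.nonempty_homeomorph_normalizeWt χ' hχ'
  obtain ⟨eσ⟩ := WProj.nonempty_homeomorph_comp_perm (normalizeWt χ) σ
  rw [show normalizeWt χ ∘ σ = normalizeWt χ' from funext hσ] at eσ
  exact ⟨e.trans (eσ.trans e'.symm)⟩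
end

section
/- Let χ = (χ₀,…,χₙ) be a weight vector, let I ⊊ {0,…,n} be a proper subset with complement J, and set q = gcd{χᵢ : i ∈ J}. Let U_I = {[z₀:…:zₙ] ∈ ℙ(χ) : zᵢ ≠ 0 for all i ∉ I}. Then U_I is homeomorphic to (ℂ^×)^{|J|−1} × (ℂ^I / μ_q⟨χ_I⟩), where μ_q is the group of q-th roots of unity acting on ℂ^I by ζ·(zᵢ)_{i∈I} = (ζ^{χᵢ}zᵢ)_{i∈I}. -/
noncomputable section

/-- `ℂ^{n+1} ∖ {0}`. -/
def CPts (n : ℕ) : Type := {z : Fin (n + 1) → ℂ // z ≠ 0}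

instance (n : ℕ) : TopologicalSpace (CPts n) := instTopologicalSpaceSubtype

/-- The weighted `ℂ^×`-action equivalence relation on `ℂ^{n+1} ∖ {0}`:
`z ∼ w` iff `w = g·z = (g^{χ₀}z₀, …, g^{χₙ}zₙ)` for some `g ∈ ℂ^×`. -/
def cpSetoid (n : ℕ) (χ : Fin (n + 1) → ℕ) : Setoid (CPts n) where
  r z w := ∃ g : ℂ, g ≠ 0 ∧ ∀ i, g ^ χ i * z.1 i = w.1 i
  iseqv := by
    constructor
    · exact fun z => ⟨1, one_ne_zero, by simp⟩
    · rintro z w ⟨g, hg, h⟩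
      refine ⟨g⁻¹, inv_ne_zero hg, fun i => ?_⟩
      rw [← h i, ← mul_assoc, ← mul_pow, inv_mul_cancel₀ hg, one_pow, one_mul]
    · rintro x y z ⟨g, hg, h⟩ ⟨g', hg', h'⟩
      refine ⟨g' * g, mul_ne_zero hg' hg, fun i => ?_⟩
      rw [← h' i, ← h i, ← mul_assoc, mul_pow]

/-- Weighted projective space realized as the quotient of `ℂ^{n+1} ∖ {0}` by the weighted
`ℂ^×`-action, with the quotient topology. -/
def CProj (n : ℕ) (χ : Fin (n + 1) → ℕ) : Type := Quotient (cpSetoid n χ)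

instance (n : ℕ) (χ : Fin (n + 1) → ℕ) : TopologicalSpace (CProj n χ) :=
  instTopologicalSpaceQuotient

end

/-- The action of the `q`-th roots of unity on `ℂ^I` with weights `χ_I`, as an
equivalence relation: `z ∼ w` iff `w = ζ·z = (ζ^{χᵢ}zᵢ)_{i∈I}` for some `ζ` with `ζ^q = 1`. -/
def muSetoid (q : ℕ) {n : ℕ} (χ : Fin (n + 1) → ℕ) (I : Finset (Fin (n + 1))) :
    Setoid (↥I → ℂ) where
  r z w := ∃ ζ : ℂ, ζ ≠ 0 ∧ ζ ^ q = 1 ∧ ∀ i : ↥I, ζ ^ χ i.1 * z i = w i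
  iseqv := by
    constructor
    · exact fun z => ⟨1, one_ne_zero, one_pow q, by simp⟩
    · rintro z w ⟨ζ, hζ, hζq, h⟩
      refine ⟨ζ⁻¹, inv_ne_zero hζ, by rw [inv_pow, hζq, inv_one], fun i => ?_⟩
      rw [← h i, ← mul_assoc, ← mul_pow, inv_mul_cancel₀ hζ, one_pow, one_mul]
    · rintro x y z ⟨ζ, hζ, hζq, h⟩ ⟨ζ', hζ', hζq', h'⟩
      refine ⟨ζ' * ζ, mul_ne_zero hζ' hζ, by rw [mul_pow, hζq, hζq', one_mul], fun i => ?_⟩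
      rw [← h' i, ← h i, ← mul_assoc, mul_pow]

/-!
Write `J = Iᶜ` and `q = gcd χ_J`. Assembling coordinates identifies `U_I` with the quotient of
`(ℂ^×)^J × ℂ^I` by the weighted `ℂ^×`-action. A unimodular monomial change of coordinates on the
torus `(ℂ^×)^J`, built from Bézout's identity, turns the action on the torus into
`t · (u₀, u) = (t^q u₀, u)` on `ℂ^× × (ℂ^×)^{|J|-1}`. After pulling back along `u₀ = s^q`, the
point `[(s, u, w)]` is determined by `u` and by the `μ_q`-orbit of `s^{-χ} w`: both sides are
quotients of `ℂ^× × (ℂ^×)^{|J|-1} × ℂ^I` by open quotient maps with the same fibres.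
-/

open Topology

section WeightedSMul

variable {ι M N : Type*}

def weightedSMul [Monoid M] [MulAction M N] (χ : ι → ℕ) (g : M) (z : ι → N) : ι → N :=
  fun i => g ^ χ i • z i

@[simp]
lemma weightedSMul_apply [Monoid M] [MulAction M N] (χ : ι → ℕ) (g : M) (z : ι → N) (i : ι) :
    weightedSMul χ g z i = g ^ χ i • z i :=
  rfl

@[simp]
lemma weightedSMul_one [Monoid M] [MulAction M N] (χ : ι → ℕ) (z : ι → N) :
    weightedSMul χ (1 : M) z = z := by
  ext; simp

@[simp]
lemma weightedSMul_zero [Monoid M] [AddMonoid N] [DistribMulAction M N] (χ : ι → ℕ) (g : M) :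
    weightedSMul χ g (0 : ι → N) = 0 := by
  ext; simp

lemma weightedSMul_mul [CommMonoid M] [MulAction M N] (χ : ι → ℕ) (g h : M) (z : ι → N) :
    weightedSMul χ (g * h) z = weightedSMul χ g (weightedSMul χ h z) := by
  ext; simp [mul_pow, mul_smul]

lemma weightedSMul_inv_smul [CommGroup M] [MulAction M N] (χ : ι → ℕ) (g : M) (z : ι → N) :
    weightedSMul χ g⁻¹ (weightedSMul χ g z) = z := by
  rw [← weightedSMul_mul, inv_mul_cancel, weightedSMul_one]

lemma weightedSMul_smul_inv [CommGroup M] [MulAction M N] (χ : ι → ℕ) (g : M) (z : ι → N) :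
    weightedSMul χ g (weightedSMul χ g⁻¹ z) = z := by
  simpa using weightedSMul_inv_smul χ g⁻¹ z

lemma weightedSMul_cons [Monoid M] [MulAction M N] {m : ℕ} (d : Fin (m + 1) → ℕ) (t : M) (x : N)
    (v : Fin m → N) :
    weightedSMul d t (Fin.cons x v) = Fin.cons (t ^ d 0 • x) (weightedSMul (Fin.tail d) t v) := by
  ext i
  cases i using Fin.cases <;> rfl

/-- The bijection `ζ ↦ s' ζ s⁻¹` matches the witnesses on the two sides. -/
lemma exists_pow_eq_one_weightedSMul_iff [CommGroup M] [MulAction M N] (χ : ι → ℕ) (q : ℕ)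
    (s s' : M) (w w' : ι → N) :
    (∃ ζ : M, ζ ^ q = 1 ∧ weightedSMul χ ζ (weightedSMul χ s⁻¹ w) = weightedSMul χ s'⁻¹ w') ↔
      ∃ g : M, g ^ q * s ^ q = s' ^ q ∧ weightedSMul χ g w = w' := by
  have key (ζ : M) : weightedSMul χ ζ (weightedSMul χ s⁻¹ w) = weightedSMul χ s'⁻¹ w' ↔
      weightedSMul χ (s' * ζ * s⁻¹) w = w' := by
    rw [mul_assoc, weightedSMul_mul, weightedSMul_mul]
    constructor
    · intro h
      rw [h, weightedSMul_smul_inv]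
    · rintro rfl
      rw [weightedSMul_inv_smul]
  constructor
  · rintro ⟨ζ, hζ, h⟩
    exact ⟨s' * ζ * s⁻¹, by simp [mul_pow, hζ], (key ζ).1 h⟩
  · rintro ⟨g, hg, h⟩
    refine ⟨s'⁻¹ * g * s, ?_, (key _).2 (by simpa [mul_assoc] using h)⟩
    rw [mul_pow, mul_pow, inv_pow, mul_assoc, hg, inv_mul_cancel]

lemma continuous_weightedSMul [Monoid M] [MulAction M N] [TopologicalSpace N]
    [ContinuousConstSMul M N] (χ : ι → ℕ) (g : M) : Continuous (weightedSMul (N := N) χ g) :=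
  continuous_pi fun i => (continuous_apply i).const_smul _

def weightedShear [CommGroup M] [TopologicalSpace M] [IsTopologicalGroup M] [MulAction M N]
    [TopologicalSpace N] [ContinuousSMul M N] (χ : ι → ℕ) : M × (ι → N) ≃ₜ M × (ι → N) where
  toFun p := (p.1, weightedSMul χ p.1⁻¹ p.2)
  invFun p := (p.1, weightedSMul χ p.1 p.2)
  left_inv p := by simp [weightedSMul_smul_inv]
  right_inv p := by simp [weightedSMul_inv_smul]
  continuous_toFun := by unfold weightedSMul; fun_prop
  continuous_invFun := by unfold weightedSMul; fun_prop

end WeightedSMul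

section FinsetGcd

variable {α β γ : Type*} [CommMonoidWithZero β] [NormalizedGCDMonoid β]

lemma Finset.univ_gcd_comp_equiv [Fintype α] [Fintype γ] (f : α → β) (e : γ ≃ α) :
    Finset.univ.gcd (f ∘ e) = Finset.univ.gcd f := by
  classical
  rw [Finset.gcd_eq_gcd_image, Finset.gcd_eq_gcd_image (s := Finset.univ) (f := f)]
  congr 1
  ext
  simp [e.surjective.exists]

lemma Finset.univ_gcd_subtype (s : Finset α) (f : α → β) :
    Finset.univ.gcd (fun j : s => f j) = s.gcd f := by
  classical
  rw [Finset.gcd_eq_gcd_image, Finset.gcd_eq_gcd_image (s := s)]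
  congr 1
  ext
  simp

lemma Fin.univ_gcd_eq_gcd_tail {m : ℕ} (d : Fin (m + 1) → ℕ) :
    Finset.univ.gcd d = Nat.gcd (d 0) (Finset.univ.gcd (Fin.tail d)) := by
  rw [Fin.univ_succ, Finset.gcd_cons, Finset.gcd_def, Finset.gcd_def, Finset.map_val,
    Multiset.map_map]
  rfl

end FinsetGcd

section QuotientMaps

variable {X : Type*} [TopologicalSpace X]

lemma isOpenQuotientMap_quotient_mk_of_exists_continuous (s : Setoid X)
    (h : ∀ x y, s x y → ∃ T : X → X, Continuous T ∧ (∀ z, s (T z) z) ∧ T y = x) :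
    IsOpenQuotientMap (Quotient.mk s) := by
  refine ⟨Quotient.mk_surjective, continuous_quotient_mk', fun O hO => ?_⟩
  have hsat : Quotient.mk s ⁻¹' (Quotient.mk s '' O) =
      ⋃ T ∈ {T : X → X | Continuous T ∧ ∀ z, s (T z) z}, T ⁻¹' O := by
    ext y
    simp only [Set.mem_preimage, Set.mem_image, Set.mem_iUnion, Set.mem_ofPred_eq, exists_prop]
    constructor
    · rintro ⟨x, hx, hxy⟩
      obtain ⟨T, hT, hTs, rfl⟩ := h x y (Quotient.exact hxy)
      exact ⟨T, ⟨hT, hTs⟩, hx⟩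
    · rintro ⟨T, ⟨-, hTs⟩, hy⟩
      exact ⟨T y, hy, Quotient.sound (hTs y)⟩
  refine isQuotientMap_quotient_mk'.isOpen_preimage.1 ?_
  change IsOpen (Quotient.mk s ⁻¹' (Quotient.mk s '' O))
  rw [hsat]
  exact isOpen_biUnion fun T hT => hO.preimage hT.1

noncomputable def Topology.IsQuotientMap.homeomorphOfFibers {S T : Type*} [TopologicalSpace S]
    [TopologicalSpace T] {p : X → S} {r : X → T} (hp : IsQuotientMap p) (hr : IsQuotientMap r)
    (h : ∀ a b, p a = p b ↔ r a = r b) : S ≃ₜ T :=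
  (hp.homeomorph (f := ⟨p, hp.continuous⟩)).symm.trans
    ((Homeomorph.Quotient.congrRight h).trans (hr.homeomorph (f := ⟨r, hr.continuous⟩)))

end QuotientMaps

@[simps]
def Fin.consHomeomorph (m : ℕ) (Y : Type*) [TopologicalSpace Y] :
    Y × (Fin m → Y) ≃ₜ (Fin (m + 1) → Y) where
  toFun p := Fin.cons p.1 p.2
  invFun v := (v 0, Fin.tail v)
  left_inv p := by simp
  right_inv v := Fin.cons_self_tail v
  continuous_toFun := Continuous.finCons (A := fun _ => Y) continuous_fst continuous_snd
  continuous_invFun := (continuous_apply 0).prodMk (continuous_pi fun i => continuous_apply _)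

section Torus

variable {G : Type*} [CommGroup G]

lemma zpow_mul_zpow_zpow_mul_zpow (x y : G) (a b c d e f : ℤ) :
    (x ^ a * y ^ b) ^ e * (x ^ c * y ^ d) ^ f = x ^ (a * e + c * f) * y ^ (b * e + d * f) := by
  simp only [mul_zpow, ← zpow_mul, zpow_add]
  ac_rfl

variable [TopologicalSpace G] [IsTopologicalGroup G]

def monomialHomeomorph (a b c d : ℤ) (h : a * d - b * c = 1) : G × G ≃ₜ G × G where
  toFun p := (p.1 ^ a * p.2 ^ b, p.1 ^ c * p.2 ^ d)
  invFun p := (p.1 ^ d * p.2 ^ (-b), p.1 ^ (-c) * p.2 ^ a)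
  left_inv p := by
    simp only [zpow_mul_zpow_zpow_mul_zpow]
    convert (show (p.1 ^ (1 : ℤ) * p.2 ^ (0 : ℤ), p.1 ^ (0 : ℤ) * p.2 ^ (1 : ℤ)) = p by simp)
      using 4 <;> first | ring1 | linear_combination h
  right_inv p := by
    simp only [zpow_mul_zpow_zpow_mul_zpow]
    convert (show (p.1 ^ (1 : ℤ) * p.2 ^ (0 : ℤ), p.1 ^ (0 : ℤ) * p.2 ^ (1 : ℤ)) = p by simp)
      using 4 <;> first | ring1 | linear_combination h
  continuous_toFun := by fun_prop
  continuous_invFun := by fun_prop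

/-- Bézout's identity `gcd a b = a A + b B` makes the matrix with rows `(a, b) / gcd a b` and
`(-B, A)` unimodular. -/
lemma exists_homeomorph_prod_pow_gcd (a b : ℕ) :
    ∃ Φ : G × G ≃ₜ G × G, ∀ t x y : G,
      Φ (t ^ Nat.gcd a b * x, y) = (t ^ a * (Φ (x, y)).1, t ^ b * (Φ (x, y)).2) := by
  obtain hab | hab := (Nat.gcd a b).eq_zero_or_pos
  · refine ⟨Homeomorph.refl _, fun t x y => ?_⟩
    simp [Nat.eq_zero_of_gcd_eq_zero_left hab, Nat.eq_zero_of_gcd_eq_zero_right hab]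
  have hbez : (Nat.gcd a b : ℤ) = a * Nat.gcdA a b + b * Nat.gcdB a b := Nat.gcd_eq_gcd_ab a b
  obtain ⟨a', ha⟩ := Nat.gcd_dvd_left a b
  obtain ⟨b', hb⟩ := Nat.gcd_dvd_right a b
  set A := Nat.gcdA a b
  set B := Nat.gcdB a b
  set g := Nat.gcd a b
  have hdet : (a' : ℤ) * A - (-B) * b' = 1 := by
    refine mul_left_cancel₀ (show (g : ℤ) ≠ 0 by exact_mod_cast hab.ne') ?_
    have haz : (a : ℤ) = g * a' := by exact_mod_cast ha
    have hbz : (b : ℤ) = g * b' := by exact_mod_cast hb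
    linear_combination -hbez - A * haz - B * hbz
  refine ⟨monomialHomeomorph _ _ _ _ hdet, fun t x y => ?_⟩
  have hta : (t ^ g) ^ (a' : ℤ) = t ^ a := by rw [ha, pow_mul, zpow_natCast]
  have htb : (t ^ g) ^ (b' : ℤ) = t ^ b := by rw [hb, pow_mul, zpow_natCast]
  simp only [monomialHomeomorph, Homeomorph.homeomorph_mk_coe, Equiv.coe_fn_mk, mul_zpow, hta,
    htb, mul_assoc]

lemma exists_homeomorph_fin_pow_gcd (m : ℕ) (d : Fin (m + 1) → ℕ) :
    ∃ Φ : G × (Fin m → G) ≃ₜ (Fin (m + 1) → G), ∀ (t x : G) (v : Fin m → G),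
      Φ (t ^ Finset.univ.gcd d * x, v) = weightedSMul d t (Φ (x, v)) := by
  induction m with
  | zero =>
    refine ⟨(Homeomorph.prodUnique G _).trans (Homeomorph.funUnique (Fin 1) G).symm,
      fun t x v => ?_⟩
    ext i
    simp [Fin.fin_one_eq_zero i]
  | succ m ih =>
    obtain ⟨Φ, hΦ⟩ := ih (Fin.tail d)
    obtain ⟨B, hB⟩ := exists_homeomorph_prod_pow_gcd (G := G) (d 0) (Finset.univ.gcd (Fin.tail d))
    refine ⟨((Homeomorph.refl G).prodCongr (Fin.consHomeomorph m G).symm).trans <|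
      (Homeomorph.prodAssoc G G _).symm.trans <| (B.prodCongr (Homeomorph.refl _)).trans <|
      (Homeomorph.prodAssoc G G _).trans <| ((Homeomorph.refl G).prodCongr Φ).trans <|
      Fin.consHomeomorph (m + 1) G, fun t x v => ?_⟩
    simp only [Homeomorph.prodAssoc, Fin.univ_gcd_eq_gcd_tail d, Homeomorph.trans_apply,
      Homeomorph.coe_prodCongr, Homeomorph.refl_apply, Prod.map_apply, id_eq,
      Fin.consHomeomorph_symm_apply, Homeomorph.homeomorph_mk_coe_symm, Equiv.prodAssoc_symm_apply,
      hB, Homeomorph.homeomorph_mk_coe, Equiv.prodAssoc_apply, hΦ]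
    exact (weightedSMul_cons (N := G) d t _ _).symm

lemma exists_homeomorph_pow_gcd {ι : Type*} [Fintype ι] {m : ℕ} (hι : Fintype.card ι = m + 1)
    (d : ι → ℕ) :
    ∃ Φ : G × (Fin m → G) ≃ₜ (ι → G), ∀ (t x : G) (v : Fin m → G),
      Φ (t ^ Finset.univ.gcd d * x, v) = weightedSMul d t (Φ (x, v)) := by
  set e := (Fintype.equivFinOfCardEq hι).symm
  obtain ⟨Φ, hΦ⟩ := exists_homeomorph_fin_pow_gcd (G := G) m (d ∘ e)
  refine ⟨Φ.trans (Homeomorph.piCongrLeft (Y := fun _ => G) e), fun t x v => ?_⟩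
  rw [← Finset.univ_gcd_comp_equiv d e, Homeomorph.trans_apply, hΦ]
  ext i
  obtain ⟨j, rfl⟩ := e.surjective i
  simp [Homeomorph.piCongrLeft_apply]

end Torus

section WeightedProjective

variable {n : ℕ} (χ : Fin (n + 1) → ℕ) (I : Finset (Fin (n + 1)))

lemma cpSetoid_iff {z w : CPts n} : cpSetoid n χ z w ↔ ∃ g : ℂˣ, weightedSMul χ g z.1 = w.1 := by
  change (∃ g : ℂ, g ≠ 0 ∧ _) ↔ _
  rw [← Units.exists_iff_ne_zero]
  simp [funext_iff, Units.smul_def]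

lemma muSetoid_iff (q : ℕ) {z w : I → ℂ} :
    muSetoid q χ I z w ↔ ∃ ζ : ℂˣ, ζ ^ q = 1 ∧ weightedSMul (fun i : I => χ i) ζ z = w := by
  change (∃ ζ : ℂ, ζ ≠ 0 ∧ _) ↔ _
  rw [← Units.exists_iff_ne_zero]
  simp [funext_iff, Units.smul_def, ← Units.val_pow_eq_pow_val, Units.val_eq_one]

lemma isOpenQuotientMap_cpSetoid_mk : IsOpenQuotientMap (Quotient.mk (cpSetoid n χ)) := by
  refine isOpenQuotientMap_quotient_mk_of_exists_continuous _ fun z w hzw => ?_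
  obtain ⟨g, hg⟩ := (cpSetoid_iff χ).1 hzw
  have hne (y : CPts n) : weightedSMul χ g⁻¹ y.1 ≠ 0 := fun h0 =>
    y.2 (by simpa [weightedSMul_smul_inv] using congrArg (weightedSMul χ g) h0)
  refine ⟨fun y => ⟨weightedSMul χ g⁻¹ y.1, hne y⟩,
    ((continuous_weightedSMul χ _).comp continuous_subtype_val).subtype_mk _,
    fun y => (cpSetoid_iff χ).2 ⟨g, weightedSMul_smul_inv χ g y.1⟩, Subtype.ext ?_⟩
  change weightedSMul χ g⁻¹ w.1 = z.1
  rw [← hg, weightedSMul_inv_smul]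

lemma isOpenQuotientMap_muSetoid_mk (q : ℕ) :
    IsOpenQuotientMap (Quotient.mk (muSetoid q χ I)) := by
  refine isOpenQuotientMap_quotient_mk_of_exists_continuous _ fun z w hzw => ?_
  obtain ⟨ζ, hζ, rfl⟩ := (muSetoid_iff χ I q).1 hzw
  exact ⟨weightedSMul _ ζ⁻¹, continuous_weightedSMul _ _,
    fun y => (muSetoid_iff χ I q).2 ⟨ζ, hζ, weightedSMul_smul_inv _ _ _⟩,
    weightedSMul_inv_smul _ _ _⟩

def chartSet : Set (CProj n χ) :=
  {x | ∃ z : CPts n, Quotient.mk (cpSetoid n χ) z = x ∧ ∀ i ∉ I, z.1 i ≠ 0}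

def assemble (x : (↥Iᶜ → ℂˣ) × (↥I → ℂ)) : Fin (n + 1) → ℂ := fun i =>
  if h : i ∈ I then x.2 ⟨i, h⟩ else x.1 ⟨i, Finset.mem_compl.2 h⟩

def untwist (q : ℕ) (p : ℂˣ × (↥I → ℂ)) : Quotient (muSetoid q χ I) :=
  Quotient.mk _ (weightedSMul (fun i : I => χ i) p.1⁻¹ p.2)

lemma isOpenQuotientMap_untwist (q : ℕ) : IsOpenQuotientMap (untwist χ I q) :=
  ((isOpenQuotientMap_muSetoid_mk χ I q).comp isOpenQuotientMap_snd).comp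
    (weightedShear _).isOpenQuotientMap

lemma untwist_eq_untwist_iff (q : ℕ) (s s' : ℂˣ) (w w' : ↥I → ℂ) :
    untwist χ I q (s, w) = untwist χ I q (s', w') ↔
      ∃ g : ℂˣ, g ^ q * s ^ q = s' ^ q ∧ weightedSMul (fun i : I => χ i) g w = w' :=
  Quotient.eq.trans ((muSetoid_iff χ I q).trans (exists_pow_eq_one_weightedSMul_iff _ _ _ _ _ _))

variable {I}

lemma assemble_of_mem (x : (↥Iᶜ → ℂˣ) × (↥I → ℂ)) (i : I) : assemble I x i = x.2 i :=
  dif_pos i.2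

lemma assemble_of_mem_compl (x : (↥Iᶜ → ℂˣ) × (↥I → ℂ)) (j : ↥Iᶜ) : assemble I x j = x.1 j :=
  dif_neg (Finset.mem_compl.1 j.2)

lemma assemble_injective : Function.Injective (assemble (n := n) I) := fun x y h =>
  Prod.ext (funext fun j => Units.ext <| by simpa [assemble_of_mem_compl] using congrFun h j)
    (funext fun i => by simpa [assemble_of_mem] using congrFun h i)

lemma assemble_ne_zero (hI : ∃ j, j ∉ I) (x : (↥Iᶜ → ℂˣ) × (↥I → ℂ)) : assemble I x ≠ 0 := by
  obtain ⟨j, hj⟩ := hI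
  intro h
  simpa [assemble_of_mem_compl x ⟨j, Finset.mem_compl.2 hj⟩] using congrFun h j

lemma weightedSMul_assemble (g : ℂˣ) (x : (↥Iᶜ → ℂˣ) × (↥I → ℂ)) :
    weightedSMul χ g (assemble I x) =
      assemble I (weightedSMul (fun j : ↥Iᶜ => χ j) g x.1,
        weightedSMul (fun i : I => χ i) g x.2) := by
  ext i
  by_cases hi : i ∈ I <;> simp [assemble, hi, Units.smul_def]

noncomputable def assembleHomeomorph (hI : ∃ j, j ∉ I) :
    ((↥Iᶜ → ℂˣ) × (↥I → ℂ)) ≃ₜ {z : CPts n | ∀ i ∉ I, z.1 i ≠ 0} where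
  toFun x := ⟨⟨assemble I x, assemble_ne_zero hI x⟩, fun i hi => by
    simp [assemble_of_mem_compl x ⟨i, Finset.mem_compl.2 hi⟩]⟩
  invFun z := (fun j => Units.mk0 (z.1.1 j) (z.2 j (Finset.mem_compl.1 j.2)), fun i => z.1.1 i)
  left_inv x := by
    ext j
    · simp [assemble_of_mem_compl]
    · simp [assemble_of_mem]
  right_inv z := Subtype.ext <| Subtype.ext <| funext fun i => by
    by_cases hi : i ∈ I <;> simp [assemble, hi]
  continuous_toFun := by
    refine Continuous.subtype_mk (Continuous.subtype_mk (continuous_pi fun i => ?_) _) _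
    by_cases hi : i ∈ I <;> simp only [assemble, hi, dite_true, dite_false] <;> fun_prop
  continuous_invFun := by
    have hcoord (i : Fin (n + 1)) :
        Continuous fun z : {z : CPts n | ∀ i ∉ I, z.1 i ≠ 0} => z.1.1 i :=
      (continuous_apply i).comp (continuous_subtype_val.comp continuous_subtype_val)
    refine .prodMk (continuous_pi fun j => Units.continuous_iff.2 ⟨hcoord j, ?_⟩)
      (continuous_pi fun i => hcoord i)
    exact (hcoord j).inv₀ fun z => z.2 j (Finset.mem_compl.1 j.2)

lemma exists_isOpenQuotientMap_chartSet (hI : ∃ j, j ∉ I) :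
    ∃ π : (↥Iᶜ → ℂˣ) × (↥I → ℂ) → chartSet χ I, IsOpenQuotientMap π ∧ ∀ x y, π x = π y ↔
      ∃ g : ℂˣ, weightedSMul (fun j : ↥Iᶜ => χ j) g x.1 = y.1 ∧
        weightedSMul (fun i : I => χ i) g x.2 = y.2 := by
  have hsat : {z : CPts n | ∀ i ∉ I, z.1 i ≠ 0} = Quotient.mk _ ⁻¹' chartSet χ I := by
    ext z
    refine ⟨fun hz => ⟨z, rfl, hz⟩, ?_⟩
    rintro ⟨w, hwz, hw⟩ i hi
    obtain ⟨g, hg⟩ := (cpSetoid_iff χ).1 (Quotient.exact hwz)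
    rw [← hg]
    simpa [Units.smul_def] using hw i hi
  let e := (assembleHomeomorph hI).trans (Homeomorph.setCongr hsat)
  refine ⟨(chartSet χ I).restrictPreimage (Quotient.mk _) ∘ e,
    ((isOpenQuotientMap_cpSetoid_mk χ).restrictPreimage _).comp e.isOpenQuotientMap,
    fun x y => ?_⟩
  rw [Subtype.ext_iff]
  refine Quotient.eq.trans ((cpSetoid_iff χ).trans ?_)
  change (∃ g : ℂˣ, weightedSMul χ g (assemble I x) = assemble I y) ↔ _
  simp only [weightedSMul_assemble, assemble_injective.eq_iff, Prod.ext_iff]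

end WeightedProjective

/-- For a proper subset `I ⊊ {0,…,n}` with complement `J` and
`q = gcd{χᵢ : i ∈ J}`, the subset `U_I = {[z₀:…:zₙ] : zᵢ ≠ 0 for i ∉ I}` of `ℙ(χ)` is
homeomorphic to `(ℂ^×)^{|J|−1} × (ℂ^I / μ_q⟨χ_I⟩)`. -/
theorem wproj_chart_homeomorph (n : ℕ) (χ : Fin (n + 1) → ℕ) (hχ : ∀ i, 0 < χ i)
    (I : Finset (Fin (n + 1))) (hI : I ≠ Finset.univ) :
    Nonempty
      ({x : CProj n χ // ∃ z : CPts n, Quotient.mk (cpSetoid n χ) z = x ∧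
          ∀ i ∉ I, z.1 i ≠ 0} ≃ₜ
        ((Fin (Iᶜ.card - 1) → {g : ℂ // g ≠ 0}) ×
          Quotient (muSetoid (Iᶜ.gcd χ) χ I))) := by
  obtain ⟨j, hj⟩ : ∃ j, j ∉ I := by simpa [Finset.eq_univ_iff_forall] using hI
  have : NeZero (Iᶜ.gcd χ) :=
    ⟨fun h => (hχ j).ne' (Finset.gcd_eq_zero_iff.1 h j (Finset.mem_compl.2 hj))⟩
  obtain ⟨Φ, hΦ⟩ := exists_homeomorph_pow_gcd (G := ℂˣ) (m := Iᶜ.card - 1)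
    (by rw [Fintype.card_coe, Nat.sub_add_cancel (Finset.card_pos.2 ⟨j, Finset.mem_compl.2 hj⟩)])
    (fun k : ↥Iᶜ => χ k)
  rw [Finset.univ_gcd_subtype] at hΦ
  obtain ⟨π, hπ, hπ_iff⟩ := exists_isOpenQuotientMap_chartSet χ ⟨j, hj⟩
  let e := Homeomorph.piCongrRight fun _ : Fin (Iᶜ.card - 1) => unitsHomeomorphNeZero (G₀ := ℂ)
  let P := π ∘ Prod.map (Φ ∘ Prod.map (· ^ Iᶜ.gcd χ) id) id
  let R : (ℂˣ × (Fin (Iᶜ.card - 1) → ℂˣ)) × (↥I → ℂ) → _ :=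
    fun y => (e y.1.2, untwist χ I (Iᶜ.gcd χ) (y.1.1, y.2))
  have hP : IsOpenQuotientMap P := hπ.comp <| (Φ.isOpenQuotientMap.comp <|
    (Complex.isQuotientCoveringMap_npow _).isOpenQuotientMap.prodMap .id).prodMap .id
  have hR : IsOpenQuotientMap R :=
    (e.isOpenQuotientMap.prodMap (isOpenQuotientMap_untwist χ I _)).comp
      (((Homeomorph.prodComm _ _).prodCongr (.refl _)).trans
        (Homeomorph.prodAssoc _ _ _)).isOpenQuotientMap
  refine ⟨hP.isQuotientMap.homeomorphOfFibers hR.isQuotientMap fun ⟨⟨s, v⟩, w⟩ ⟨⟨s', v'⟩, w'⟩ => ?_⟩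
  change π _ = π _ ↔ (_, _) = (_, _)
  simp only [hπ_iff, Function.comp_apply, Prod.map_apply, id_eq, ← hΦ, Φ.injective.eq_iff,
    Prod.mk.injEq, untwist_eq_untwist_iff, e.injective.eq_iff]
  exact ⟨fun ⟨g, ⟨hs, hv⟩, hw⟩ => ⟨hv, g, hs, hw⟩, fun ⟨hv, g, hs, hw⟩ => ⟨g, ⟨hs, hv⟩, hw⟩⟩
end

section
/- Let χ = (χ₀,…,χₙ) be a weight vector with χ₀ = 1. Then the open subset U = {[z₀:…:zₙ] ∈ ℙ(χ) : z₀ ≠ 0} is homeomorphic to ℂⁿ, and its complement ℙ(χ) ∖ U is the image of {z : z₀ = 0}, which is canonically homeomorphic to the weighted projective space ℙ(χ₁,…,χₙ). -/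
/-!
The weighted `ℂ^×`-action is by homeomorphisms, so the quotient map `ℂ^{n+1} ∖ 0 → ℙ(χ)` is
open, and it therefore stays a quotient map over any subset of `ℙ(χ)`, in particular over
`U = {z₀ ≠ 0}` and over its complement `{z₀ = 0}`. As `χ₀ = 1`, every orbit in `U` contains
exactly one point with `z₀ = 1`, namely `(1, z_i / z₀^{χ_i})`, which gives the chart; the orbits
in `{z₀ = 0}` are those of the points `(0, w)` under the action with weights `χ₁, …, χₙ`. In both
cases a continuous injection from the model space through which the restricted quotient map
factors continuously is a homeomorphism.
-/

open Topology

noncomputable def Topology.IsQuotientMap.homeomorphOfFactorization {W X Y : Type*}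
    [TopologicalSpace W] [TopologicalSpace X] [TopologicalSpace Y] {q : W → Y}
    (hq : IsQuotientMap q) {f : X → Y} (hf : Continuous f) (hinj : Function.Injective f)
    {s : W → X} (hs : Continuous s) (hfs : f ∘ s = q) : X ≃ₜ Y :=
  have hbij : Function.Bijective f :=
    ⟨hinj, Function.Surjective.of_comp (hfs ▸ hq.surjective)⟩
  { Equiv.ofBijective f hbij with
    continuous_toFun := hf
    continuous_invFun := hq.continuous_iff.mpr <| hs.congr fun w => by
      rw [← hfs]
      exact ((Equiv.ofBijective f hbij).symm_apply_apply (s w)).symm }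

namespace CPts

variable {m : ℕ}

lemma continuous_val : Continuous fun z : CPts m => z.1 := continuous_subtype_val

lemma continuous_iff_continuous_val {X : Type*} [TopologicalSpace X] {f : X → CPts m} :
    Continuous f ↔ Continuous fun x => (f x).1 :=
  continuous_induced_rng

def weightedAct (χ : Fin (m + 1) → ℕ) (g : ℂˣ) (z : CPts m) : CPts m :=
  ⟨fun i => (g : ℂ) ^ χ i * z.1 i, fun h => z.2 <| funext fun i => by
    simpa using congrFun h i⟩

lemma continuous_weightedAct (χ : Fin (m + 1) → ℕ) (g : ℂˣ) :
    Continuous (weightedAct χ g) :=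
  continuous_iff_continuous_val.2 <| continuous_pi fun i =>
    continuous_const.mul ((continuous_apply i).comp continuous_val)

lemma rel_iff_exists_weightedAct {χ : Fin (m + 1) → ℕ} {z w : CPts m} :
    cpSetoid m χ z w ↔ ∃ g : ℂˣ, weightedAct χ g z = w := by
  constructor
  · rintro ⟨g, hg, h⟩
    exact ⟨Units.mk0 g hg, Subtype.ext (funext h)⟩
  · rintro ⟨g, rfl⟩
    exact ⟨g, g.ne_zero, fun _ => rfl⟩

lemma rel_coord_eq_zero_iff {χ : Fin (m + 1) → ℕ} {z w : CPts m} (h : cpSetoid m χ z w)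
    (j : Fin (m + 1)) : z.1 j = 0 ↔ w.1 j = 0 := by
  obtain ⟨g, hg, h⟩ := h
  rw [← h j, mul_eq_zero, or_iff_right (pow_ne_zero _ hg)]

def consOne (w : Fin (m + 1) → ℂ) : CPts (m + 1) :=
  ⟨Fin.cons 1 w, fun h => one_ne_zero (α := ℂ) (by simpa using congrFun h 0)⟩

lemma continuous_consOne : Continuous (consOne (m := m)) :=
  continuous_iff_continuous_val.2 (continuous_const.finCons continuous_id :
    Continuous fun w : Fin (m + 1) → ℂ => (Fin.cons 1 w : Fin (m + 2) → ℂ))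

def consZero (w : CPts m) : CPts (m + 1) :=
  ⟨Fin.cons 0 w.1, fun h => w.2 <| funext fun i => by simpa using congrFun h i.succ⟩

lemma continuous_consZero : Continuous (consZero (m := m)) :=
  continuous_iff_continuous_val.2 (continuous_const.finCons continuous_val :
    Continuous fun w : CPts m => (Fin.cons 0 w.1 : Fin (m + 2) → ℂ))

lemma tail_ne_zero {z : CPts (m + 1)} (hz : z.1 0 = 0) : Fin.tail z.1 ≠ 0 := fun h =>
  z.2 (funext (Fin.cases hz (congrFun h)))

lemma consZero_eq {z : CPts (m + 1)} {w : CPts m} (hz : z.1 0 = 0)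
    (hw : ∀ i, w.1 i = z.1 i.succ) : consZero w = z :=
  Subtype.ext (funext (Fin.cases hz.symm hw))

lemma rel_consZero_iff {χ : Fin (m + 2) → ℕ} {w w' : CPts m} :
    cpSetoid (m + 1) χ (consZero w) (consZero w') ↔
      cpSetoid m (fun i => χ i.succ) w w' := by
  show (∃ g : ℂ, g ≠ 0 ∧ ∀ i, g ^ χ i * (Fin.cons 0 w.1 : Fin (m + 2) → ℂ) i =
      (Fin.cons 0 w'.1 : Fin (m + 2) → ℂ) i) ↔
    ∃ g : ℂ, g ≠ 0 ∧ ∀ i, g ^ χ i.succ * w.1 i = w'.1 i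
  simp only [Fin.forall_fin_succ, Fin.cons_zero, Fin.cons_succ, mul_zero, true_and]

end CPts

namespace CProj

open CPts

section

variable {m : ℕ} {χ : Fin (m + 1) → ℕ}

lemma preimage_setOf_exists_mk {P : CPts m → Prop}
    (hP : ∀ z w, cpSetoid m χ z w → P z → P w) :
    Quotient.mk (cpSetoid m χ) ⁻¹'
        {x | ∃ z, Quotient.mk (cpSetoid m χ) z = x ∧ P z} = {z | P z} :=
  Set.ext fun z => ⟨fun ⟨_, hz', hPz'⟩ => hP _ _ (Quotient.exact hz') hPz', fun h => ⟨z, rfl, h⟩⟩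

lemma preimage_setOf_coord_ne_zero (j : Fin (m + 1)) :
    Quotient.mk (cpSetoid m χ) ⁻¹'
        {x | ∃ z : CPts m, Quotient.mk (cpSetoid m χ) z = x ∧ z.1 j ≠ 0} = {z | z.1 j ≠ 0} :=
  preimage_setOf_exists_mk fun _ _ h => mt (rel_coord_eq_zero_iff h j).2

lemma preimage_setOf_coord_eq_zero (j : Fin (m + 1)) :
    Quotient.mk (cpSetoid m χ) ⁻¹'
        {x | ∃ z : CPts m, Quotient.mk (cpSetoid m χ) z = x ∧ z.1 j = 0} = {z | z.1 j = 0} :=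
  preimage_setOf_exists_mk fun _ _ h => (rel_coord_eq_zero_iff h j).1

lemma compl_setOf_coord_ne_zero (j : Fin (m + 1)) :
    {x | ∃ z : CPts m, Quotient.mk (cpSetoid m χ) z = x ∧ z.1 j ≠ 0}ᶜ =
      {x | ∃ z : CPts m, Quotient.mk (cpSetoid m χ) z = x ∧ z.1 j = 0} := by
  refine Set.preimage_injective.mpr Quotient.mk_surjective ?_
  rw [Set.preimage_compl, preimage_setOf_coord_ne_zero, preimage_setOf_coord_eq_zero]
  ext z
  exact not_not

lemma isQuotientMap_mk : IsQuotientMap (Quotient.mk (cpSetoid m χ)) :=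
  isQuotientMap_quotient_mk'

lemma preimage_image_mk (O : Set (CPts m)) :
    Quotient.mk (cpSetoid m χ) ⁻¹' (Quotient.mk (cpSetoid m χ) '' O) =
      ⋃ g : ℂˣ, weightedAct χ g ⁻¹' O := by
  ext z
  simp only [Set.mem_preimage, Set.mem_image, Set.mem_iUnion]
  constructor
  · rintro ⟨o, ho, hoz⟩
    obtain ⟨g, rfl⟩ := rel_iff_exists_weightedAct.mp (Quotient.exact hoz.symm)
    exact ⟨g, ho⟩
  · rintro ⟨g, hg⟩
    exact ⟨_, hg, (Quotient.sound (rel_iff_exists_weightedAct.mpr ⟨g, rfl⟩)).symm⟩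

lemma isOpenQuotientMap_mk : IsOpenQuotientMap (Quotient.mk (cpSetoid m χ)) := by
  refine ⟨Quotient.mk_surjective, isQuotientMap_mk.continuous, fun O hO => ?_⟩
  rw [← isQuotientMap_mk.isOpen_preimage, preimage_image_mk]
  exact isOpen_iUnion fun g => hO.preimage (continuous_weightedAct χ g)

lemma isOpen_setOf_coord_ne_zero (j : Fin (m + 1)) :
    IsOpen {x | ∃ z : CPts m, Quotient.mk (cpSetoid m χ) z = x ∧ z.1 j ≠ 0} := by
  rw [← isQuotientMap_mk.isOpen_preimage, preimage_setOf_coord_ne_zero]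
  exact isOpen_ne_fun ((continuous_apply j).comp continuous_val) continuous_const

end

section

variable {n : ℕ} {χ : Fin (n + 2) → ℕ}

lemma mk_consOne_injective (h0 : χ 0 = 1) :
    Function.Injective fun w => Quotient.mk (cpSetoid (n + 1) χ) (consOne w) := by
  intro w w' h
  obtain ⟨g, -, hg⟩ := Quotient.exact h
  have hg1 : g = 1 := by simpa [consOne, h0] using hg 0
  funext i
  simpa [consOne, hg1] using hg i.succ

lemma mk_consOne_div (h0 : χ 0 = 1) {z : CPts (n + 1)} (hz : z.1 0 ≠ 0) :
    Quotient.mk (cpSetoid (n + 1) χ) (consOne fun i => z.1 i.succ / z.1 0 ^ χ i.succ) =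
      Quotient.mk (cpSetoid (n + 1) χ) z :=
  Quotient.sound ⟨z.1 0, hz, Fin.cases (by simp [consOne, h0]) fun i => by
    simp [consOne, mul_div_cancel₀ _ (pow_ne_zero _ hz)]⟩

noncomputable def affineChart (h0 : χ 0 = 1) :
    (Fin (n + 1) → ℂ) ≃ₜ {x : CProj (n + 1) χ |
      ∃ z : CPts (n + 1), Quotient.mk (cpSetoid (n + 1) χ) z = x ∧ z.1 0 ≠ 0} :=
  let U := {x : CProj (n + 1) χ |
    ∃ z : CPts (n + 1), Quotient.mk (cpSetoid (n + 1) χ) z = x ∧ z.1 0 ≠ 0}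
  have hz : ∀ z : Quotient.mk (cpSetoid (n + 1) χ) ⁻¹' U, z.1.1 0 ≠ 0 := fun z =>
    (preimage_setOf_coord_ne_zero 0).subset z.2
  (isOpenQuotientMap_mk.restrictPreimage U).isQuotientMap.homeomorphOfFactorization
    (f := fun w => ⟨Quotient.mk _ (consOne w), consOne w, rfl, by simp [consOne]⟩)
    ((isQuotientMap_mk.continuous.comp continuous_consOne).subtype_mk _)
    (fun _ _ h => mk_consOne_injective h0 (congrArg Subtype.val h))
    (s := fun z i => z.1.1 i.succ / z.1.1 0 ^ χ i.succ)
    (continuous_pi fun i =>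
      ((continuous_apply i.succ).comp (continuous_val.comp continuous_subtype_val)).div₀
        (((continuous_apply 0).comp (continuous_val.comp continuous_subtype_val)).pow _)
        fun z => pow_ne_zero _ (hz z))
    (funext fun z => Subtype.ext (mk_consOne_div h0 (hz z)))

lemma mk_consZero_eq_mk_consZero_iff {w w' : CPts n} :
    Quotient.mk (cpSetoid (n + 1) χ) (consZero w) = Quotient.mk _ (consZero w') ↔
      Quotient.mk (cpSetoid n fun i => χ i.succ) w = Quotient.mk _ w' :=
  Quotient.eq.trans (rel_consZero_iff.trans Quotient.eq.symm)

def toCoordZeroLocus :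
    CProj n (fun i => χ i.succ) → {x : CProj (n + 1) χ |
      ∃ z : CPts (n + 1), Quotient.mk (cpSetoid (n + 1) χ) z = x ∧ z.1 0 = 0} :=
  Quotient.lift (fun w => ⟨Quotient.mk _ (consZero w), consZero w, rfl, by simp [consZero]⟩)
    fun _ _ h => Subtype.ext (mk_consZero_eq_mk_consZero_iff.2 (Quotient.sound h))

lemma continuous_toCoordZeroLocus : Continuous (toCoordZeroLocus (χ := χ)) :=
  ((isQuotientMap_mk.continuous.comp continuous_consZero).subtype_mk _).quotient_lift _

lemma toCoordZeroLocus_injective : Function.Injective (toCoordZeroLocus (χ := χ)) := by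
  rintro ⟨w⟩ ⟨w'⟩ h
  exact mk_consZero_eq_mk_consZero_iff.1 (congrArg Subtype.val h)

noncomputable def coordZeroLocusHomeomorph :
    CProj n (fun i => χ i.succ) ≃ₜ {x : CProj (n + 1) χ |
      ∃ z : CPts (n + 1), Quotient.mk (cpSetoid (n + 1) χ) z = x ∧ z.1 0 = 0} :=
  let Z := {x : CProj (n + 1) χ |
    ∃ z : CPts (n + 1), Quotient.mk (cpSetoid (n + 1) χ) z = x ∧ z.1 0 = 0}
  have hz : ∀ z : Quotient.mk (cpSetoid (n + 1) χ) ⁻¹' Z, z.1.1 0 = 0 := fun z =>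
    (preimage_setOf_coord_eq_zero 0).subset z.2
  (isOpenQuotientMap_mk.restrictPreimage Z).isQuotientMap.homeomorphOfFactorization
    continuous_toCoordZeroLocus toCoordZeroLocus_injective
    (s := fun z => Quotient.mk _ ⟨Fin.tail z.1.1, tail_ne_zero (hz z)⟩)
    (isQuotientMap_mk.continuous.comp <| continuous_iff_continuous_val.2 <| continuous_pi fun i =>
      (continuous_apply i.succ).comp (continuous_val.comp continuous_subtype_val))
    (funext fun z => Subtype.ext <| congrArg (Quotient.mk (cpSetoid (n + 1) χ)) <|
      consZero_eq (w := ⟨Fin.tail z.1.1, tail_ne_zero (hz z)⟩) (hz z) fun _ => rfl)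

end

end CProj

theorem wproj_affine_chart_and_complement_general (n : ℕ) (χ : Fin (n + 2) → ℕ)
    (h0 : χ 0 = 1) :
    IsOpen {x : CProj (n + 1) χ |
      ∃ z : CPts (n + 1), Quotient.mk (cpSetoid (n + 1) χ) z = x ∧ z.1 0 ≠ 0} ∧
    Nonempty
      ({x : CProj (n + 1) χ // ∃ z : CPts (n + 1),
          Quotient.mk (cpSetoid (n + 1) χ) z = x ∧ z.1 0 ≠ 0} ≃ₜ (Fin (n + 1) → ℂ)) ∧
    {x : CProj (n + 1) χ |
        ∃ z : CPts (n + 1), Quotient.mk (cpSetoid (n + 1) χ) z = x ∧ z.1 0 ≠ 0}ᶜ =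
      {x : CProj (n + 1) χ |
        ∃ z : CPts (n + 1), Quotient.mk (cpSetoid (n + 1) χ) z = x ∧ z.1 0 = 0} ∧
    ∃ F : ({x : CProj (n + 1) χ |
        ∃ z : CPts (n + 1), Quotient.mk (cpSetoid (n + 1) χ) z = x ∧ z.1 0 ≠ 0}ᶜ :
          Set (CProj (n + 1) χ)) ≃ₜ CProj n (fun i => χ i.succ),
      ∀ (z : CPts (n + 1))
        (hmem : (Quotient.mk (cpSetoid (n + 1) χ) z : CProj (n + 1) χ) ∈
          {x : CProj (n + 1) χ |
            ∃ z' : CPts (n + 1), Quotient.mk (cpSetoid (n + 1) χ) z' = x ∧ z'.1 0 ≠ 0}ᶜ)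
        (w : CPts n), (∀ i, w.1 i = z.1 i.succ) →
        F ⟨Quotient.mk (cpSetoid (n + 1) χ) z, hmem⟩ =
          Quotient.mk (cpSetoid n fun i => χ i.succ) w := by
  have hcompl := CProj.compl_setOf_coord_ne_zero (χ := χ) 0
  refine ⟨CProj.isOpen_setOf_coord_ne_zero 0, ⟨(CProj.affineChart h0).symm⟩, hcompl,
    (Homeomorph.setCongr hcompl).trans CProj.coordZeroLocusHomeomorph.symm, ?_⟩
  intro z hmem w hw
  have hz : z.1 0 = 0 := (CProj.preimage_setOf_coord_eq_zero 0).subset (hcompl ▸ hmem)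
  exact CProj.coordZeroLocusHomeomorph.symm_apply_eq.2
    (Subtype.ext (congrArg (Quotient.mk (cpSetoid (n + 1) χ)) (CPts.consZero_eq hz hw).symm))

/-- If `χ₀ = 1`, then the subset `U = {[z₀:…:zₙ] : z₀ ≠ 0}` of `ℙ(χ)` is
open and homeomorphic to `ℂⁿ`; its complement is the image of `{z : z₀ = 0}` and is
canonically homeomorphic to the weighted projective space `ℙ(χ₁,…,χₙ)` (via the map
forgetting the zero-th coordinate). -/
theorem wproj_affine_chart_and_complement (n : ℕ) (χ : Fin (n + 2) → ℕ)
    (hχ : ∀ i, 0 < χ i) (h0 : χ 0 = 1) :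
    IsOpen {x : CProj (n + 1) χ |
      ∃ z : CPts (n + 1), Quotient.mk (cpSetoid (n + 1) χ) z = x ∧ z.1 0 ≠ 0} ∧
    Nonempty
      ({x : CProj (n + 1) χ // ∃ z : CPts (n + 1),
          Quotient.mk (cpSetoid (n + 1) χ) z = x ∧ z.1 0 ≠ 0} ≃ₜ (Fin (n + 1) → ℂ)) ∧
    {x : CProj (n + 1) χ |
        ∃ z : CPts (n + 1), Quotient.mk (cpSetoid (n + 1) χ) z = x ∧ z.1 0 ≠ 0}ᶜ =
      {x : CProj (n + 1) χ |
        ∃ z : CPts (n + 1), Quotient.mk (cpSetoid (n + 1) χ) z = x ∧ z.1 0 = 0} ∧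
    ∃ F : ({x : CProj (n + 1) χ |
        ∃ z : CPts (n + 1), Quotient.mk (cpSetoid (n + 1) χ) z = x ∧ z.1 0 ≠ 0}ᶜ :
          Set (CProj (n + 1) χ)) ≃ₜ CProj n (fun i => χ i.succ),
      ∀ (z : CPts (n + 1))
        (hmem : (Quotient.mk (cpSetoid (n + 1) χ) z : CProj (n + 1) χ) ∈
          {x : CProj (n + 1) χ |
            ∃ z' : CPts (n + 1), Quotient.mk (cpSetoid (n + 1) χ) z' = x ∧ z'.1 0 ≠ 0}ᶜ)
        (w : CPts n), (∀ i, w.1 i = z.1 i.succ) →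
        F ⟨Quotient.mk (cpSetoid (n + 1) χ) z, hmem⟩ =
          Quotient.mk (cpSetoid n fun i => χ i.succ) w :=
  wproj_affine_chart_and_complement_general n χ h0
end
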